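/- If X follows the von Mises–Fisher distribution on S^k with density proportional to exp(κ xᵀμ) (κ > 0, μ ∈ S^k) with respect to surface measure, then μ is the unique Fréchet mean of X with respect to the intrinsic (angular) distance d(x,y) = arccos(⟨x,y⟩): for every p ∈ S^k with p ≠ μ, E[d(X,p)²] > E[d(X,μ)²]. -/

import Mathlib

/-!
The reflection `R` of the sphere exchanging `μ` and `p` preserves the surface measure `σ` and
swaps `a x = ⟪x, μ⟫` with `b x = ⟪x, p⟫`. For the increasing density profile
`f t = c exp (κ t)` and the decreasing loss `g t = arccos t ^ 2`, this symmetrisation gives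
`2 (∫ f(a) g(b) dσ - ∫ f(a) g(a) dσ) = ∫ (f(a) - f(b)) (g(b) - g(a)) dσ`,
and the last integrand is positive off the null set `⟪x, μ - p⟫ = 0`.
-/

open MeasureTheory Metric Real
open scoped RealInnerProductSpace Pointwise

theorem mul_pos_of_strictMonoOn_of_strictAntiOn {s : Set ℝ} {f g : ℝ → ℝ}
    (hf : StrictMonoOn f s) (hg : StrictAntiOn g s) {x y : ℝ} (hx : x ∈ s) (hy : y ∈ s)
    (hxy : x ≠ y) : 0 < (f x - f y) * (g y - g x) := by
  rcases hxy.lt_or_gt with h | h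
  · exact mul_pos_of_neg_of_neg (sub_neg.2 (hf hx hy h)) (sub_neg.2 (hg hx hy h))
  · exact mul_pos (sub_pos.2 (hf hy hx h)) (sub_pos.2 (hg hy hx h))

theorem integral_mul_lt_integral_mul_of_swap {α : Type*} [MeasurableSpace α] {ν : Measure α}
    [NeZero ν] {T : α ≃ᵐ α} (hT : MeasurePreserving T ν ν) {a b : α → ℝ}
    (hab : ∀ x, a (T x) = b x) (hba : ∀ x, b (T x) = a x) {s : Set ℝ} {f g : ℝ → ℝ}
    (hf : StrictMonoOn f s) (hg : StrictAntiOn g s) (ha : ∀ x, a x ∈ s) (hb : ∀ x, b x ∈ s)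
    (hint_aa : Integrable (fun x => f (a x) * g (a x)) ν)
    (hint_ab : Integrable (fun x => f (a x) * g (b x)) ν) (hne : ∀ᵐ x ∂ν, a x ≠ b x) :
    ∫ x, f (a x) * g (a x) ∂ν < ∫ x, f (a x) * g (b x) ∂ν := by
  have hint_bb : Integrable (fun x => f (b x) * g (b x)) ν := by
    simpa only [Function.comp_def, hab] using
      (hT.integrable_comp_emb T.measurableEmbedding).2 hint_aa
  have hint_ba : Integrable (fun x => f (b x) * g (a x)) ν := by
    simpa only [Function.comp_def, hab, hba] using
      (hT.integrable_comp_emb T.measurableEmbedding).2 hint_ab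
  have hswap_bb : ∫ x, f (b x) * g (b x) ∂ν = ∫ x, f (a x) * g (a x) ∂ν := by
    simpa only [hab] using hT.integral_comp' (fun x => f (a x) * g (a x))
  have hswap_ba : ∫ x, f (b x) * g (a x) ∂ν = ∫ x, f (a x) * g (b x) ∂ν := by
    simpa only [hab, hba] using hT.integral_comp' (fun x => f (a x) * g (b x))
  have hint_cross : Integrable (fun x => f (a x) * g (b x) + f (b x) * g (a x)) ν :=
    hint_ab.add hint_ba
  have hint_diag : Integrable (fun x => f (a x) * g (a x) + f (b x) * g (b x)) ν :=
    hint_aa.add hint_bb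
  have hD_pos : ∀ᵐ x ∂ν, 0 < (f (a x) * g (b x) + f (b x) * g (a x))
      - (f (a x) * g (a x) + f (b x) * g (b x)) := hne.mono fun x hx => by
    have := mul_pos_of_strictMonoOn_of_strictAntiOn hf hg (ha x) (hb x) hx
    linarith
  have hD_integral := (integral_pos_iff_support_of_nonneg_ae
    (hD_pos.mono fun x hx => hx.le) (hint_cross.sub hint_diag)).2 <|
      (Measure.measure_univ_pos.2 (NeZero.ne ν)).trans_eq
        (measure_congr (ae_eq_univ.2 (hD_pos.mono fun x hx => hx.ne'))).symm
  rw [integral_sub hint_cross hint_diag,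
    integral_add hint_ab hint_ba, integral_add hint_aa hint_bb, hswap_bb, hswap_ba] at hD_integral
  linarith

theorem integral_withDensity_ofReal {α : Type*} [MeasurableSpace α] {ν : Measure α}
    {F : α → ℝ} (hF : AEMeasurable F ν) (hF_nonneg : 0 ≤ᵐ[ν] F) (g : α → ℝ) :
    ∫ x, g x ∂ν.withDensity (fun x => ENNReal.ofReal (F x)) = ∫ x, F x * g x ∂ν := by
  rw [integral_withDensity_eq_integral_toReal_smul₀ hF.ennreal_ofReal
    (.of_forall fun _ => ENNReal.ofReal_lt_top)]
  refine integral_congr_ae (hF_nonneg.mono fun x hx => ?_)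
  simp [ENNReal.toReal_ofReal hx]

section

variable {E : Type*} [NormedAddCommGroup E] [NormedSpace ℝ E] [MeasurableSpace E] [BorelSpace E]

def LinearIsometryEquiv.sphereMeasurableEquiv (R : E ≃ₗᵢ[ℝ] E) :
    sphere (0 : E) 1 ≃ᵐ sphere (0 : E) 1 :=
  (R.toHomeomorph.subtype fun x => by simp).toMeasurableEquiv

@[simp]
theorem LinearIsometryEquiv.coe_sphereMeasurableEquiv (R : E ≃ₗᵢ[ℝ] E)
    (x : sphere (0 : E) 1) :
    (R.sphereMeasurableEquiv x : E) = R x :=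
  rfl

theorem LinearIsometryEquiv.measurePreserving_sphereMeasurableEquiv {μ : Measure E}
    {R : E ≃ₗᵢ[ℝ] E} (hR : MeasurePreserving R μ μ) :
    MeasurePreserving R.sphereMeasurableEquiv μ.toSphere μ.toSphere := by
  refine ⟨R.sphereMeasurableEquiv.measurable, Measure.ext fun s hs => ?_⟩
  rw [Measure.map_apply R.sphereMeasurableEquiv.measurable hs,
    Measure.toSphere_apply' _ (R.sphereMeasurableEquiv.measurable hs),
    Measure.toSphere_apply' _ hs]
  have hset : Set.Ioo (0 : ℝ) 1 • ((↑) '' (R.sphereMeasurableEquiv ⁻¹' s) : Set E)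
      = R ⁻¹' (Set.Ioo (0 : ℝ) 1 • ((↑) '' s)) := by
    ext x
    constructor
    · rintro ⟨r, hr, _, ⟨y, hy, rfl⟩, rfl⟩
      exact ⟨r, hr, _, ⟨_, hy, rfl⟩, by simp [R.map_smul]⟩
    · rintro ⟨r, hr, _, ⟨z, hz, rfl⟩, hx⟩
      refine ⟨r, hr, _, ⟨R.symm.sphereMeasurableEquiv z, by
        rwa [Set.mem_preimage,
          show R.sphereMeasurableEquiv (R.symm.sphereMeasurableEquiv z) = z from
            Subtype.ext (by simp)], rfl⟩, ?_⟩
      simp [← R.symm.map_smul, hx]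
  rw [hset, hR.measure_preimage_emb R.toHomeomorph.measurableEmbedding]

theorem MeasureTheory.Measure.toSphere_preimage_submodule_eq_zero [FiniteDimensional ℝ E]
    (μ : Measure E) [μ.IsAddHaarMeasure] {K : Submodule ℝ E} (hK : K ≠ ⊤) :
    μ.toSphere (((↑) : sphere (0 : E) 1 → E) ⁻¹' K) = 0 := by
  rw [Measure.toSphere_apply' _
    (K.closed_of_finiteDimensional.measurableSet.preimage measurable_subtype_coe)]
  refine mul_eq_zero_of_right _ (measure_mono_null ?_ (Measure.addHaar_submodule μ K hK))
  rintro _ ⟨r, -, _, ⟨x, hx, rfl⟩, rfl⟩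
  exact K.smul_mem r hx

end

section

variable {E : Type*} [NormedAddCommGroup E] [InnerProductSpace ℝ E] [FiniteDimensional ℝ E]
  [MeasurableSpace E] [BorelSpace E]

theorem MeasureTheory.Measure.ae_toSphere_inner_ne (μ : Measure E) [μ.IsAddHaarMeasure]
    {u v : E} (huv : u ≠ v) :
    ∀ᵐ x : sphere (0 : E) 1 ∂μ.toSphere, ⟪(x : E), u⟫ ≠ ⟪(x : E), v⟫ := by
  have hK : (ℝ ∙ (u - v))ᗮ ≠ ⊤ := by
    simpa [Submodule.orthogonal_eq_top_iff, sub_eq_zero] using huv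
  refine measure_mono_null (fun x hx => ?_) (μ.toSphere_preimage_submodule_eq_zero hK)
  rw [Set.mem_preimage, SetLike.mem_coe, Submodule.mem_orthogonal_singleton_iff_inner_right,
    inner_sub_left, real_inner_comm (x : E) u, real_inner_comm (x : E) v, sub_eq_zero]
  exact not_not.1 hx

end

theorem vonMisesFisher_frechetMean_intrinsic_general (k : ℕ) (κ : ℝ) (hκ : 0 < κ)
    (μ : sphere (0 : EuclideanSpace ℝ (Fin (k + 1))) 1) (c : ℝ) (hc : 0 < c)
    (P : Measure (sphere (0 : EuclideanSpace ℝ (Fin (k + 1))) 1))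
    (hP : P = ((volume : Measure (EuclideanSpace ℝ (Fin (k + 1)))).toSphere).withDensity
      (fun x => ENNReal.ofReal (c * Real.exp
        (κ * ⟪(x : EuclideanSpace ℝ (Fin (k + 1))), (μ : EuclideanSpace ℝ (Fin (k + 1)))⟫)))) :
    ∀ p : sphere (0 : EuclideanSpace ℝ (Fin (k + 1))) 1, p ≠ μ →
      ∫ x, (Real.arccos ⟪(x : EuclideanSpace ℝ (Fin (k + 1))), (μ : EuclideanSpace ℝ (Fin (k + 1)))⟫) ^ 2 ∂P
        < ∫ x, (Real.arccos ⟪(x : EuclideanSpace ℝ (Fin (k + 1))), (p : EuclideanSpace ℝ (Fin (k + 1)))⟫) ^ 2 ∂P := by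
  intro p hpμ
  set E := EuclideanSpace ℝ (Fin (k + 1))
  set R := Submodule.reflection (ℝ ∙ ((μ : E) - p))ᗮ
  have hRμ : R μ = p := Submodule.reflection_sub (by simp)
  have hRp : R p = μ := by rw [← hRμ]; exact Submodule.reflection_reflection _ _
  have hf : StrictMono fun t => c * exp (κ * t) :=
    (exp_strictMono.comp (strictMono_mul_left_of_pos hκ)).const_mul hc
  have hg : StrictAntiOn (fun t => arccos t ^ 2) (Set.Icc (-1) 1) := fun s hs t ht hst =>
    pow_lt_pow_left₀ (strictAntiOn_arccos hs ht hst) (arccos_nonneg t) two_ne_zero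
  have hmem : ∀ x y : sphere (0 : E) 1, ⟪(x : E), y⟫ ∈ Set.Icc (-1) 1 := fun x y =>
    abs_le.1 (by simpa using abs_real_inner_le_norm (x : E) y)
  have : NeZero (volume : Measure E).toSphere := ⟨Measure.toSphere_ne_zero _⟩
  rw [hP, integral_withDensity_ofReal (by fun_prop) (.of_forall fun _ => by positivity),
    integral_withDensity_ofReal (by fun_prop) (.of_forall fun _ => by positivity)]
  exact integral_mul_lt_integral_mul_of_swap
    (R.measurePreserving_sphereMeasurableEquiv (LinearIsometryEquiv.measurePreserving R))
    (fun x => by simp [← hRp, R.inner_map_map]) (fun x => by simp [← hRμ, R.inner_map_map])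
    (hf.strictMonoOn _) hg (fun x => hmem x μ) (fun x => hmem x p)
    ((by fun_prop : Continuous _).integrable_of_hasCompactSupport (.of_compactSpace _))
    ((by fun_prop : Continuous _).integrable_of_hasCompactSupport (.of_compactSpace _))
    ((volume : Measure E).ae_toSphere_inner_ne (Subtype.coe_injective.ne hpμ.symm))

/-- The location parameter `μ` is the unique Fréchet mean of the von Mises–Fisher
distribution on the sphere `S^k` with respect to the intrinsic angular distance
`d(x,y) = arccos⟪x,y⟫`. -/
theorem vonMisesFisher_frechetMean_intrinsic (k : ℕ) (κ : ℝ) (hκ : 0 < κ)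
    (μ : sphere (0 : EuclideanSpace ℝ (Fin (k + 1))) 1) (c : ℝ) (hc : 0 < c)
    (P : Measure (sphere (0 : EuclideanSpace ℝ (Fin (k + 1))) 1))
    (hP : P = ((volume : Measure (EuclideanSpace ℝ (Fin (k + 1)))).toSphere).withDensity
      (fun x => ENNReal.ofReal (c * Real.exp
        (κ * ⟪(x : EuclideanSpace ℝ (Fin (k + 1))), (μ : EuclideanSpace ℝ (Fin (k + 1)))⟫))))
    (hProb : IsProbabilityMeasure P) :
    ∀ p : sphere (0 : EuclideanSpace ℝ (Fin (k + 1))) 1, p ≠ μ →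
      ∫ x, (Real.arccos ⟪(x : EuclideanSpace ℝ (Fin (k + 1))), (μ : EuclideanSpace ℝ (Fin (k + 1)))⟫) ^ 2 ∂P
        < ∫ x, (Real.arccos ⟪(x : EuclideanSpace ℝ (Fin (k + 1))), (p : EuclideanSpace ℝ (Fin (k + 1)))⟫) ^ 2 ∂P :=
  vonMisesFisher_frechetMean_intrinsic_general k κ hκ μ c hc P hP
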